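/- Let a, b be real with a + b > 0 and a − b > 0, let B = [[a, b], [b, a]], let Δt > 0 and 0 ≤ ν ≤ 1. Define the half ODE step O(ξ)_j = exp(−(Δt/2)·B) ξ_j applied pointwise to ξ : ℤ → ℝ², and the PDE step P which applies the minmod flux-limited Lax–Wendroff update with CFL number ν to the first component rightward (using differences ξ⁺_j − ξ⁺_{j−1}) and to the second component leftward (using differences ξ⁻_{j+1} − ξ⁻_j). Then for every finitely supported ξ : ℤ → ℝ², the full Strang-split step ξ ↦ O(P(O(ξ))) satisfies both Σ_j ‖(O∘P∘O)(ξ)_{j+1} − (O∘P∘O)(ξ)_j‖₁ ≤ Σ_j ‖ξ_{j+1} − ξ_j‖₁ and Σ_j ‖(O∘P∘O)(ξ)_j‖₂² ≤ Σ_j ‖ξ_j‖₂². -/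

import Mathlib

/-- `minmod(p, q) = 0` if `p·q ≤ 0` and `sign(p)·min(|p|, |q|)` otherwise. -/
noncomputable def minmod (p q : ℝ) : ℝ :=
  if p * q ≤ 0 then 0 else Real.sign p * min |p| |q|

/-- The minmod flux-limited Lax–Wendroff update for rightward advection (uses
differences `u_j − u_{j−1}`) with CFL number `ν`. -/
noncomputable def lwMinmodStepR (ν : ℝ) (u : ℤ → ℝ) : ℤ → ℝ := fun j =>
  u j - ν * (u j - u (j - 1)) -
    (1 / 2) * ν * (1 - ν) *
      (minmod (u j - u (j - 1)) (u (j + 1) - u j) -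
        minmod (u (j - 1) - u (j - 2)) (u j - u (j - 1)))

/-- The mirrored minmod flux-limited Lax–Wendroff update for leftward advection (uses
differences `u_{j+1} − u_j`) with CFL number `ν`. -/
noncomputable def lwMinmodStepL (ν : ℝ) (u : ℤ → ℝ) : ℤ → ℝ := fun j =>
  u j + ν * (u (j + 1) - u j) -
    (1 / 2) * ν * (1 - ν) *
      (minmod (u (j + 1) - u j) (u (j + 2) - u (j + 1)) -
        minmod (u j - u (j - 1)) (u (j + 1) - u j))

/-- The PDE step of the splitting scheme: the rightward minmod Lax–Wendroff update on
the first component and the leftward one on the second component. -/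
noncomputable def pdeStep (ν : ℝ) (ξ : ℤ → Fin 2 → ℝ) : ℤ → Fin 2 → ℝ := fun j =>
  ![lwMinmodStepR ν (fun k => ξ k 0) j, lwMinmodStepL ν (fun k => ξ k 1) j]

/-- The half ODE step of the splitting scheme: pointwise application of
`exp(−(Δt/2)·B)`. -/
noncomputable def odeHalfStep (B : Matrix (Fin 2) (Fin 2) ℝ) (Δt : ℝ)
    (ξ : ℤ → Fin 2 → ℝ) : ℤ → Fin 2 → ℝ := fun j =>
  (NormedSpace.exp ((-(Δt / 2)) • B)).mulVec (ξ j)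

/-!
Each factor of the Strang step contracts both functionals. The ODE half-step multiplies every
`ξ_j` by `exp(-(Δt/2) B) = !![α, β; β, α]`, whose eigenvalues `α ± β = exp(-(Δt/2)(a ± b))` lie
in `(0, 1]`, so `|α| + |β| ≤ 1`.

The PDE step acts componentwise, and the leftward update is the rightward one conjugated by
`j ↦ -j`. The rightward update is conservative, `û_j = u_j - C_{j-1}`, and since both minmod
slopes adjacent to a jump `Δu_k` lie between `0` and `Δu_k`, so does the flux increment `C_k`.
Then `Δû_j = (Δu_j - C_j) + C_{j-1}` with `|Δu_j - C_j| + |C_j| = |Δu_j|` (Harten). For the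
Lyapunov function, `û_j² - u_j²` is a difference `H_{j-1} - H_j` of a discrete energy flux plus a
term in `Δu_{j-1}` and its two adjacent slopes that is nonpositive for `0 ≤ ν ≤ 1`.
-/

open Function Matrix fwdDiff

section Minmod

@[simp]
lemma minmod_zero_left (q : ℝ) : minmod 0 q = 0 := by
  simp [minmod]

lemma minmod_comm (p q : ℝ) : minmod p q = minmod q p := by
  unfold minmod
  rw [mul_comm]
  split_ifs with h
  · rfl
  · rw [not_le] at h
    have hsign : Real.sign p = Real.sign q := by
      rcases mul_pos_iff.mp h with ⟨hq, hp⟩ | ⟨hq, hp⟩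
      · rw [Real.sign_of_pos hp, Real.sign_of_pos hq]
      · rw [Real.sign_of_neg hp, Real.sign_of_neg hq]
    rw [hsign, min_comm]

lemma minmod_neg (p q : ℝ) : minmod (-p) (-q) = -minmod p q := by
  simp only [minmod, neg_mul_neg, Real.sign_neg, abs_neg]
  split_ifs <;> ring

-- `m * (m - p) ≤ 0` is how we say that `m` lies between `0` and `p`.
lemma minmod_mul_sub_left_nonpos (p q : ℝ) : minmod p q * (minmod p q - p) ≤ 0 := by
  unfold minmod
  split_ifs with h
  · simp
  · rw [not_le] at h
    rcases mul_pos_iff.mp h with ⟨hp, hq⟩ | ⟨hp, hq⟩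
    · rw [Real.sign_of_pos hp, abs_of_pos hp, abs_of_pos hq, one_mul]
      nlinarith [min_le_left p q, le_min hp.le hq.le]
    · rw [Real.sign_of_neg hp, abs_of_neg hp, abs_of_neg hq]
      nlinarith [min_le_left (-p) (-q), le_min (neg_nonneg.2 hp.le) (neg_nonneg.2 hq.le)]

lemma minmod_mul_sub_right_nonpos (p q : ℝ) : minmod p q * (minmod p q - q) ≤ 0 :=
  minmod_comm p q ▸ minmod_mul_sub_left_nonpos q p

end Minmod

section LocalInequalities

variable {ν : ℝ}

lemma of_between_zero_of_neg_invariant {P : ℝ → ℝ → ℝ → Prop}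
    (hneg : ∀ d m M, P (-d) (-m) (-M) → P d m M)
    (hpos : ∀ d m M, 0 ≤ m → m ≤ d → 0 ≤ M → M ≤ d → P d m M)
    {d m M : ℝ} (hm : m * (m - d) ≤ 0) (hM : M * (M - d) ≤ 0) : P d m M := by
  rcases le_total 0 d with hd | hd
  · exact hpos d m M (by nlinarith) (by nlinarith) (by nlinarith) (by nlinarith)
  · exact hneg d m M (hpos _ _ _ (by nlinarith) (by nlinarith) (by nlinarith) (by nlinarith))

lemma lw_increment_mul_sub_nonpos (hν₀ : 0 ≤ ν) (hν₁ : ν ≤ 1) {d m M : ℝ}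
    (hm : m * (m - d) ≤ 0) (hM : M * (M - d) ≤ 0) :
    (ν * d + ν * (1 - ν) / 2 * (M - m)) * (ν * d + ν * (1 - ν) / 2 * (M - m) - d) ≤ 0 := by
  refine of_between_zero_of_neg_invariant (P := fun d m M =>
    (ν * d + ν * (1 - ν) / 2 * (M - m)) * (ν * d + ν * (1 - ν) / 2 * (M - m) - d) ≤ 0)
    (fun d m M h => by ring_nf at h ⊢; linarith) (fun d m M hm₀ hmd hM₀ hMd => ?_) hm hM
  have hk : 0 ≤ ν * (1 - ν) := mul_nonneg hν₀ (by linarith)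
  apply mul_nonpos_of_nonneg_of_nonpos
  · nlinarith [mul_nonneg hk (by linarith : 0 ≤ M - m + d), mul_nonneg hν₀ (hm₀.trans hmd)]
  · nlinarith [mul_nonneg hk (by linarith : 0 ≤ d - (M - m)),
      mul_nonneg (by linarith : 0 ≤ 1 - ν) (hm₀.trans hmd)]

lemma lw_energy_defect_nonpos (hν₀ : 0 ≤ ν) (hν₁ : ν ≤ 1) {d m M : ℝ}
    (hm : m * (m - d) ≤ 0) (hM : M * (M - d) ≤ 0) :
    (ν * d + ν * (1 - ν) / 2 * (M - m)) * (ν * d + ν * (1 - ν) / 2 * (M - m) - d) +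
      ν * (1 - ν) / 2 * d * (m + M) ≤ 0 := by
  refine of_between_zero_of_neg_invariant (P := fun d m M =>
    (ν * d + ν * (1 - ν) / 2 * (M - m)) * (ν * d + ν * (1 - ν) / 2 * (M - m) - d) +
      ν * (1 - ν) / 2 * d * (m + M) ≤ 0)
    (fun d m M h => by ring_nf at h ⊢; linarith) (fun d m M hm₀ hmd hM₀ hMd => ?_) hm hM
  have hk : 0 ≤ ν * (1 - ν) / 2 := by have := mul_nonneg hν₀ (sub_nonneg.2 hν₁); linarith
  have hd : 0 ≤ d := hm₀.trans hmd
  have hbracket : ν * (1 - ν) / 2 * (M - m) ^ 2 ≤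
      2 * ν * (d * (d - M)) + 2 * (1 - ν) * (d * (d - m)) := by
    rcases le_total m M with h | h
    · have hsq : (M - m) ^ 2 ≤ d * (d - m) := by nlinarith
      nlinarith [mul_nonneg hν₀ (mul_nonneg hd (sub_nonneg.2 hMd)),
        mul_nonneg (mul_nonneg hν₀ (sub_nonneg.2 hν₁)) (sub_nonneg.2 hsq),
        mul_nonneg (sub_nonneg.2 hν₁) (mul_nonneg hd (sub_nonneg.2 hmd))]
    · have hsq : (M - m) ^ 2 ≤ d * (d - M) := by nlinarith
      nlinarith [mul_nonneg (sub_nonneg.2 hν₁) (mul_nonneg hd (sub_nonneg.2 hmd)),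
        mul_nonneg (mul_nonneg hν₀ (sub_nonneg.2 hν₁)) (sub_nonneg.2 hsq),
        mul_nonneg hν₀ (mul_nonneg hd (sub_nonneg.2 hMd))]
  calc _ = ν * (1 - ν) / 2 * (ν * (1 - ν) / 2 * (M - m) ^ 2 -
        (2 * ν * (d * (d - M)) + 2 * (1 - ν) * (d * (d - m)))) := by ring
    _ ≤ 0 := mul_nonpos_of_nonneg_of_nonpos hk (by linarith)

end LocalInequalities

section Summation

lemma abs_sub_add_abs_eq {c d : ℝ} (h : c * (c - d) ≤ 0) : |d - c| + |c| = |d| := by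
  rcases mul_nonpos_iff.mp h with ⟨hc, hcd⟩ | ⟨hc, hcd⟩
  · rw [abs_of_nonneg hc, abs_of_nonneg (by linarith : 0 ≤ d - c), abs_of_nonneg (by linarith)]
    ring
  · rw [abs_of_nonpos hc, abs_of_nonpos (by linarith : d - c ≤ 0), abs_of_nonpos (by linarith)]
    ring

lemma tsum_comp_sub_one {α : Type*} [AddCommMonoid α] [TopologicalSpace α] (f : ℤ → α) :
    ∑' j, f (j - 1) = ∑' j, f j :=
  (Equiv.subRight 1).tsum_eq f

lemma summable_comp_sub_one_iff {α : Type*} [AddCommMonoid α] [TopologicalSpace α] {f : ℤ → α} :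
    (Summable fun j => f (j - 1)) ↔ Summable f :=
  (Equiv.subRight 1).summable_iff

/-- Harten's lemma, in incremental form. -/
theorem tsum_abs_fwdDiff_sub_shift_le {u C : ℤ → ℝ} (hu : Summable fun j => |Δ_[1] u j|)
    (hC : ∀ k, C k * (C k - Δ_[1] u k) ≤ 0) :
    ∑' j, |Δ_[1] (fun j => u j - C (j - 1)) j| ≤ ∑' j, |Δ_[1] u j| := by
  have hsplit (j : ℤ) : Δ_[1] (fun j => u j - C (j - 1)) j = (Δ_[1] u j - C j) + C (j - 1) := by
    simp only [fwdDiff, add_sub_cancel_right]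
    ring
  have hrest : Summable fun j => |Δ_[1] u j - C j| :=
    hu.of_nonneg_of_le (fun _ => abs_nonneg _) fun j => by
      linarith [abs_sub_add_abs_eq (hC j), abs_nonneg (C j)]
  have hmoved : Summable fun j => |C j| :=
    hu.of_nonneg_of_le (fun _ => abs_nonneg _) fun j => by
      linarith [abs_sub_add_abs_eq (hC j), abs_nonneg (Δ_[1] u j - C j)]
  have hmoved' : Summable fun j => |C (j - 1)| := summable_comp_sub_one_iff.mpr hmoved
  have hbound (j : ℤ) : |Δ_[1] (fun j => u j - C (j - 1)) j| ≤ |Δ_[1] u j - C j| + |C (j - 1)| :=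
    hsplit j ▸ abs_add_le _ _
  calc ∑' j, |Δ_[1] (fun j => u j - C (j - 1)) j|
      ≤ ∑' j, (|Δ_[1] u j - C j| + |C (j - 1)|) :=
        ((hrest.add hmoved').of_nonneg_of_le (fun _ => abs_nonneg _) hbound).tsum_le_tsum hbound
          (hrest.add hmoved')
    _ = ∑' j, |Δ_[1] u j - C j| + ∑' j, |C j| := by
        rw [hrest.tsum_add hmoved', tsum_comp_sub_one fun j => |C j|]
    _ = ∑' j, |Δ_[1] u j| := by
        rw [← hrest.tsum_add hmoved]
        exact tsum_congr fun j => abs_sub_add_abs_eq (hC j)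

theorem tsum_le_tsum_of_sub_le_sub_shift {f g H : ℤ → ℝ} (hf : Summable f) (hg : Summable g)
    (hH : Summable H) (h : ∀ j, f j - g j ≤ H (j - 1) - H j) : ∑' j, f j ≤ ∑' j, g j := by
  have hH' : Summable fun j => H (j - 1) := summable_comp_sub_one_iff.mpr hH
  have := (hf.sub hg).tsum_le_tsum h (hH'.sub hH)
  rw [hf.tsum_sub hg, hH'.tsum_sub hH, tsum_comp_sub_one H, sub_self] at this
  linarith

lemma abs_fwdDiff_comp_neg (f : ℤ → ℝ) (j : ℤ) :
    |Δ_[1] (fun k => f (-k)) j| = |Δ_[1] f (-1 - j)| := by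
  simp only [fwdDiff]
  rw [abs_sub_comm]
  ring_nf

lemma tsum_abs_fwdDiff_comp_neg (f : ℤ → ℝ) :
    ∑' j, |Δ_[1] (fun k => f (-k)) j| = ∑' j, |Δ_[1] f j| := by
  simp only [abs_fwdDiff_comp_neg]
  exact (Equiv.subLeft (-1)).tsum_eq fun j => |Δ_[1] f j|

lemma summable_abs_fwdDiff_comp_neg_iff {f : ℤ → ℝ} :
    (Summable fun j => |Δ_[1] (fun k => f (-k)) j|) ↔ Summable fun j => |Δ_[1] f j| := by
  simp only [abs_fwdDiff_comp_neg]
  exact (Equiv.subLeft (-1 : ℤ)).summable_iff (f := fun j => |Δ_[1] f j|)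

end Summation

section LaxWendroff

variable {ν : ℝ} {u : ℤ → ℝ}

/-- The limited slope `m_{j+1/2}`. -/
noncomputable def minmodSlope (u : ℤ → ℝ) (j : ℤ) : ℝ := minmod (Δ_[1] u (j - 1)) (Δ_[1] u j)

/-- `F_{k+3/2} - F_{k+1/2}` for the numerical flux `F_{j+1/2} = ν u_j + ν(1-ν)/2 m_{j+1/2}`. -/
noncomputable def lwIncrement (ν : ℝ) (u : ℤ → ℝ) (k : ℤ) : ℝ :=
  ν * Δ_[1] u k + ν * (1 - ν) / 2 * (minmodSlope u (k + 1) - minmodSlope u k)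

noncomputable def lwEnergyFlux (ν : ℝ) (u : ℤ → ℝ) (k : ℤ) : ℝ :=
  ν * u k ^ 2 + ν * (1 - ν) * u k * minmodSlope u k

lemma lwMinmodStepR_eq_sub_lwIncrement (ν : ℝ) (u : ℤ → ℝ) (j : ℤ) :
    lwMinmodStepR ν u j = u j - lwIncrement ν u (j - 1) := by
  simp only [lwMinmodStepR, lwIncrement, minmodSlope, fwdDiff, sub_add_cancel,
    show j - 1 - 1 = j - 2 by ring, show j - 2 + 1 = j - 1 by ring]
  ring

lemma lwMinmodStepL_eq_lwMinmodStepR_comp_neg (ν : ℝ) (u : ℤ → ℝ) (j : ℤ) :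
    lwMinmodStepL ν u j = lwMinmodStepR ν (fun k => u (-k)) (-j) := by
  have hswap (p q : ℝ) : minmod (-q) (-p) = -minmod p q := by rw [minmod_neg, minmod_comm]
  simp only [lwMinmodStepL, lwMinmodStepR, neg_neg, show -j - 1 = -(j + 1) by ring,
    show -j - 2 = -(j + 2) by ring, show -j + 1 = -(j - 1) by ring]
  rw [← neg_sub (u (j + 1)) (u j), ← neg_sub (u j) (u (j - 1)), ← neg_sub (u (j + 2)) (u (j + 1)),
    hswap, hswap]
  ring

lemma minmodSlope_mul_sub_nonpos (u : ℤ → ℝ) (k : ℤ) :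
    minmodSlope u k * (minmodSlope u k - Δ_[1] u k) ≤ 0 :=
  minmod_mul_sub_right_nonpos _ _

lemma minmodSlope_succ_mul_sub_nonpos (u : ℤ → ℝ) (k : ℤ) :
    minmodSlope u (k + 1) * (minmodSlope u (k + 1) - Δ_[1] u k) ≤ 0 := by
  simpa [minmodSlope] using minmod_mul_sub_left_nonpos (Δ_[1] u k) (Δ_[1] u (k + 1))

lemma lwIncrement_mul_sub_nonpos (hν₀ : 0 ≤ ν) (hν₁ : ν ≤ 1) (u : ℤ → ℝ) (k : ℤ) :
    lwIncrement ν u k * (lwIncrement ν u k - Δ_[1] u k) ≤ 0 :=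
  lw_increment_mul_sub_nonpos hν₀ hν₁ (minmodSlope_mul_sub_nonpos u k)
    (minmodSlope_succ_mul_sub_nonpos u k)

lemma lwMinmodStepR_sq_sub_sq_le (hν₀ : 0 ≤ ν) (hν₁ : ν ≤ 1) (u : ℤ → ℝ) (j : ℤ) :
    lwMinmodStepR ν u j ^ 2 - u j ^ 2 ≤ lwEnergyFlux ν u (j - 1) - lwEnergyFlux ν u j := by
  have hdefect := lw_energy_defect_nonpos hν₀ hν₁ (minmodSlope_mul_sub_nonpos u (j - 1))
    (minmodSlope_succ_mul_sub_nonpos u (j - 1))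
  rw [lwMinmodStepR_eq_sub_lwIncrement]
  simp only [lwIncrement, lwEnergyFlux, fwdDiff, sub_add_cancel] at hdefect ⊢
  linear_combination hdefect

theorem tsum_abs_fwdDiff_lwMinmodStepR_le (hν₀ : 0 ≤ ν) (hν₁ : ν ≤ 1)
    (hu : Summable fun j => |Δ_[1] u j|) :
    ∑' j, |Δ_[1] (lwMinmodStepR ν u) j| ≤ ∑' j, |Δ_[1] u j| := by
  simp only [funext (lwMinmodStepR_eq_sub_lwIncrement ν u)]
  exact tsum_abs_fwdDiff_sub_shift_le hu (lwIncrement_mul_sub_nonpos hν₀ hν₁ u)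

theorem tsum_abs_fwdDiff_lwMinmodStepL_le (hν₀ : 0 ≤ ν) (hν₁ : ν ≤ 1)
    (hu : Summable fun j => |Δ_[1] u j|) :
    ∑' j, |Δ_[1] (lwMinmodStepL ν u) j| ≤ ∑' j, |Δ_[1] u j| := by
  have hL : lwMinmodStepL ν u = fun k => lwMinmodStepR ν (fun i => u (-i)) (-k) :=
    funext (lwMinmodStepL_eq_lwMinmodStepR_comp_neg ν u)
  rw [hL, tsum_abs_fwdDiff_comp_neg, ← tsum_abs_fwdDiff_comp_neg u]
  exact tsum_abs_fwdDiff_lwMinmodStepR_le hν₀ hν₁ (summable_abs_fwdDiff_comp_neg_iff.mpr hu)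

end LaxWendroff

section FiniteSupport

variable {ν : ℝ} {u : ℤ → ℝ}

lemma Function.HasFiniteSupport.apply {α ι M : Type*} [Zero M] {f : α → ι → M}
    (hf : HasFiniteSupport f) (i : ι) : HasFiniteSupport fun a => f a i := by
  fun_prop (disch := simp)

lemma Function.HasFiniteSupport.fwdDiff (hu : HasFiniteSupport u) : HasFiniteSupport (Δ_[1] u) := by
  unfold _root_.fwdDiff
  fun_prop (disch := first | exact add_left_injective _ | simp)

lemma Function.HasFiniteSupport.lwMinmodStepR (hu : HasFiniteSupport u) :
    HasFiniteSupport (lwMinmodStepR ν u) := by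
  unfold _root_.lwMinmodStepR
  fun_prop (disch := first | exact add_left_injective _ | exact sub_left_injective | simp)

lemma Function.HasFiniteSupport.lwMinmodStepL (hu : HasFiniteSupport u) :
    HasFiniteSupport (lwMinmodStepL ν u) := by
  unfold _root_.lwMinmodStepL
  fun_prop (disch := first | exact add_left_injective _ | exact sub_left_injective | simp)

lemma Function.HasFiniteSupport.lwEnergyFlux (hu : HasFiniteSupport u) :
    HasFiniteSupport (lwEnergyFlux ν u) := by
  have hΔu := hu.fwdDiff
  unfold _root_.lwEnergyFlux minmodSlope
  fun_prop (disch := first | exact sub_left_injective | simp)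

lemma Function.HasFiniteSupport.summable_abs_fwdDiff (hu : HasFiniteSupport u) :
    Summable fun j => |Δ_[1] u j| :=
  summable_of_hasFiniteSupport (hu.fwdDiff.comp abs_zero)

lemma Function.HasFiniteSupport.summable_sq (hu : HasFiniteSupport u) : Summable fun j => u j ^ 2 :=
  summable_of_hasFiniteSupport (hu.comp (zero_pow two_ne_zero))

end FiniteSupport

section Energy

variable {ν : ℝ} {u : ℤ → ℝ}

theorem tsum_lwMinmodStepR_sq_le (hν₀ : 0 ≤ ν) (hν₁ : ν ≤ 1) (hu : HasFiniteSupport u) :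
    ∑' j, lwMinmodStepR ν u j ^ 2 ≤ ∑' j, u j ^ 2 :=
  tsum_le_tsum_of_sub_le_sub_shift hu.lwMinmodStepR.summable_sq hu.summable_sq
    (summable_of_hasFiniteSupport hu.lwEnergyFlux) (lwMinmodStepR_sq_sub_sq_le hν₀ hν₁ u)

theorem tsum_lwMinmodStepL_sq_le (hν₀ : 0 ≤ ν) (hν₁ : ν ≤ 1) (hu : HasFiniteSupport u) :
    ∑' j, lwMinmodStepL ν u j ^ 2 ≤ ∑' j, u j ^ 2 := by
  have hv : HasFiniteSupport fun k => u (-k) := hu.comp_of_injective neg_injective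
  simp only [lwMinmodStepL_eq_lwMinmodStepR_comp_neg]
  rw [tsum_comp_neg (fun j => lwMinmodStepR ν (fun k => u (-k)) j ^ 2), ← tsum_comp_neg (u · ^ 2)]
  exact tsum_lwMinmodStepR_sq_le hν₀ hν₁ hv

end Energy

section TwoComponents

noncomputable def totalVariation (ξ : ℤ → Fin 2 → ℝ) : ℝ :=
  ∑' j, (|Δ_[1] (ξ · 0) j| + |Δ_[1] (ξ · 1) j|)

noncomputable def lyapunov (ξ : ℤ → Fin 2 → ℝ) : ℝ :=
  ∑' j, (ξ j 0 ^ 2 + ξ j 1 ^ 2)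

variable {ν : ℝ} {ξ : ℤ → Fin 2 → ℝ}

lemma Function.HasFiniteSupport.pdeStep (hξ : HasFiniteSupport ξ) :
    HasFiniteSupport (pdeStep ν ξ) := by
  have hR := (hξ.apply 0).lwMinmodStepR (ν := ν)
  have hL := (hξ.apply 1).lwMinmodStepL (ν := ν)
  unfold _root_.pdeStep
  fun_prop (disch := simp)

lemma Function.HasFiniteSupport.odeHalfStep (hξ : HasFiniteSupport ξ)
    (B : Matrix (Fin 2) (Fin 2) ℝ) (Δt : ℝ) : HasFiniteSupport (odeHalfStep B Δt ξ) := by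
  unfold _root_.odeHalfStep
  fun_prop (disch := simp)

lemma Function.HasFiniteSupport.summable_abs_fwdDiff_add_abs_fwdDiff (hξ : HasFiniteSupport ξ) :
    Summable fun j => |Δ_[1] (ξ · 0) j| + |Δ_[1] (ξ · 1) j| :=
  (hξ.apply 0).summable_abs_fwdDiff.add (hξ.apply 1).summable_abs_fwdDiff

lemma Function.HasFiniteSupport.summable_sq_add_sq (hξ : HasFiniteSupport ξ) :
    Summable fun j => ξ j 0 ^ 2 + ξ j 1 ^ 2 :=
  (hξ.apply 0).summable_sq.add (hξ.apply 1).summable_sq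

theorem totalVariation_pdeStep_le (hν₀ : 0 ≤ ν) (hν₁ : ν ≤ 1) (hξ : HasFiniteSupport ξ) :
    totalVariation (pdeStep ν ξ) ≤ totalVariation ξ := by
  have hξ₀ := hξ.apply 0
  have hξ₁ := hξ.apply 1
  calc totalVariation (pdeStep ν ξ)
      = ∑' j, |Δ_[1] (lwMinmodStepR ν (ξ · 0)) j| + ∑' j, |Δ_[1] (lwMinmodStepL ν (ξ · 1)) j| :=
        hξ₀.lwMinmodStepR.summable_abs_fwdDiff.tsum_add hξ₁.lwMinmodStepL.summable_abs_fwdDiff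
    _ ≤ ∑' j, |Δ_[1] (ξ · 0) j| + ∑' j, |Δ_[1] (ξ · 1) j| :=
        add_le_add (tsum_abs_fwdDiff_lwMinmodStepR_le hν₀ hν₁ hξ₀.summable_abs_fwdDiff)
          (tsum_abs_fwdDiff_lwMinmodStepL_le hν₀ hν₁ hξ₁.summable_abs_fwdDiff)
    _ = totalVariation ξ :=
        (hξ₀.summable_abs_fwdDiff.tsum_add hξ₁.summable_abs_fwdDiff).symm

theorem lyapunov_pdeStep_le (hν₀ : 0 ≤ ν) (hν₁ : ν ≤ 1) (hξ : HasFiniteSupport ξ) :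
    lyapunov (pdeStep ν ξ) ≤ lyapunov ξ := by
  have hξ₀ := hξ.apply 0
  have hξ₁ := hξ.apply 1
  calc lyapunov (pdeStep ν ξ)
      = ∑' j, lwMinmodStepR ν (ξ · 0) j ^ 2 + ∑' j, lwMinmodStepL ν (ξ · 1) j ^ 2 :=
        hξ₀.lwMinmodStepR.summable_sq.tsum_add hξ₁.lwMinmodStepL.summable_sq
    _ ≤ ∑' j, ξ j 0 ^ 2 + ∑' j, ξ j 1 ^ 2 :=
        add_le_add (tsum_lwMinmodStepR_sq_le hν₀ hν₁ hξ₀) (tsum_lwMinmodStepL_sq_le hν₀ hν₁ hξ₁)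
    _ = lyapunov ξ := (hξ₀.summable_sq.tsum_add hξ₁.summable_sq).symm

theorem totalVariation_mulVec_le {A : Matrix (Fin 2) (Fin 2) ℝ}
    (hA : ∀ x, |(A *ᵥ x) 0| + |(A *ᵥ x) 1| ≤ |x 0| + |x 1|)
    (hξ : Summable fun j => |Δ_[1] (ξ · 0) j| + |Δ_[1] (ξ · 1) j|) :
    totalVariation (fun j => A *ᵥ ξ j) ≤ totalVariation ξ := by
  have hbound (j : ℤ) : |Δ_[1] (fun j => A *ᵥ ξ j) j 0| + |Δ_[1] (fun j => A *ᵥ ξ j) j 1| ≤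
      |Δ_[1] (ξ · 0) j| + |Δ_[1] (ξ · 1) j| := by
    simpa only [fwdDiff, mulVec_sub, Pi.sub_apply] using hA (Δ_[1] ξ j)
  exact (hξ.of_nonneg_of_le (fun _ => by positivity) hbound).tsum_le_tsum hbound hξ

theorem lyapunov_mulVec_le {A : Matrix (Fin 2) (Fin 2) ℝ}
    (hA : ∀ x, (A *ᵥ x) 0 ^ 2 + (A *ᵥ x) 1 ^ 2 ≤ x 0 ^ 2 + x 1 ^ 2)
    (hξ : Summable fun j => ξ j 0 ^ 2 + ξ j 1 ^ 2) :
    lyapunov (fun j => A *ᵥ ξ j) ≤ lyapunov ξ :=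
  (hξ.of_nonneg_of_le (fun _ => by positivity) fun j => hA (ξ j)).tsum_le_tsum
    (fun j => hA (ξ j)) hξ

end TwoComponents

section HalfStep

/-- Diagonalization in the eigenbasis `(1, 1)`, `(1, -1)`. -/
lemma exp_neg_smul_symm_fin_two (a b s : ℝ) :
    NormedSpace.exp ((-s) • !![a, b; b, a]) =
      !![(Real.exp (-s * (a + b)) + Real.exp (-s * (a - b))) / 2,
         (Real.exp (-s * (a + b)) - Real.exp (-s * (a - b))) / 2;
         (Real.exp (-s * (a + b)) - Real.exp (-s * (a - b))) / 2,
         (Real.exp (-s * (a + b)) + Real.exp (-s * (a - b))) / 2] := by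
  have hU : (!![1, 1; 1, -1] : Matrix (Fin 2) (Fin 2) ℝ) *
      !![1 / 2, 1 / 2; 1 / 2, -1 / 2] = 1 := by
    ext i j; fin_cases i <;> fin_cases j <;> simp [mul_apply, Fin.sum_univ_two] <;> norm_num
  have hU' : (!![1 / 2, 1 / 2; 1 / 2, -1 / 2] : Matrix (Fin 2) (Fin 2) ℝ) *
      !![1, 1; 1, -1] = 1 := by
    ext i j; fin_cases i <;> fin_cases j <;> simp [mul_apply, Fin.sum_univ_two] <;> norm_num
  let U : (Matrix (Fin 2) (Fin 2) ℝ)ˣ := ⟨_, _, hU, hU'⟩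
  have hdiag : (-s) • !![a, b; b, a] =
      (U : Matrix (Fin 2) (Fin 2) ℝ) * diagonal ![-s * (a + b), -s * (a - b)] *
        (↑U⁻¹ : Matrix (Fin 2) (Fin 2) ℝ) := by
    ext i j; fin_cases i <;> fin_cases j <;>
      simp [U, mul_apply, Fin.sum_univ_two, diagonal, vecHead, vecTail] <;> ring
  have hexp : NormedSpace.exp (![-s * (a + b), -s * (a - b)] : Fin 2 → ℝ) =
      ![Real.exp (-s * (a + b)), Real.exp (-s * (a - b))] := by
    funext i
    rw [Pi.coe_exp, ← Real.exp_eq_exp_ℝ]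
    fin_cases i <;> simp
  rw [hdiag, exp_units_conj, exp_diagonal, hexp]
  ext i j; fin_cases i <;> fin_cases j <;>
    simp [U, mul_apply, Fin.sum_univ_two, diagonal, vecHead, vecTail] <;> ring

variable {α β : ℝ}

lemma abs_mulVec_symm_fin_two_le (h : |α| + |β| ≤ 1) (x : Fin 2 → ℝ) :
    |(!![α, β; β, α] *ᵥ x) 0| + |(!![α, β; β, α] *ᵥ x) 1| ≤ |x 0| + |x 1| := by
  simp only [mulVec, dotProduct, Fin.sum_univ_two, of_apply, cons_val', cons_val_zero,
    cons_val_one, empty_val', cons_val_fin_one]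
  calc |α * x 0 + β * x 1| + |β * x 0 + α * x 1|
      ≤ (|α| * |x 0| + |β| * |x 1|) + (|β| * |x 0| + |α| * |x 1|) := by
        rw [← abs_mul, ← abs_mul, ← abs_mul, ← abs_mul]
        exact add_le_add (abs_add_le _ _) (abs_add_le _ _)
    _ = (|α| + |β|) * (|x 0| + |x 1|) := by ring
    _ ≤ |x 0| + |x 1| := mul_le_of_le_one_left (by positivity) h

lemma sq_mulVec_symm_fin_two_le (h : |α| + |β| ≤ 1) (x : Fin 2 → ℝ) :
    (!![α, β; β, α] *ᵥ x) 0 ^ 2 + (!![α, β; β, α] *ᵥ x) 1 ^ 2 ≤ x 0 ^ 2 + x 1 ^ 2 := by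
  simp only [mulVec, dotProduct, Fin.sum_univ_two, of_apply, cons_val', cons_val_zero,
    cons_val_one, empty_val', cons_val_fin_one]
  have hsum : |α + β| ≤ 1 := (abs_add_le α β).trans h
  have hdiff : |α - β| ≤ 1 := (abs_sub α β).trans h
  have hs : (α + β) ^ 2 ≤ 1 := by nlinarith [sq_abs (α + β), abs_nonneg (α + β)]
  have hd : (α - β) ^ 2 ≤ 1 := by nlinarith [sq_abs (α - β), abs_nonneg (α - β)]
  calc (α * x 0 + β * x 1) ^ 2 + (β * x 0 + α * x 1) ^ 2
      = ((α + β) ^ 2 * (x 0 + x 1) ^ 2 + (α - β) ^ 2 * (x 0 - x 1) ^ 2) / 2 := by ring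
    _ ≤ (1 * (x 0 + x 1) ^ 2 + 1 * (x 0 - x 1) ^ 2) / 2 := by gcongr
    _ = x 0 ^ 2 + x 1 ^ 2 := by ring

lemma abs_add_div_two_add_abs_sub_div_two_le_one {e₁ e₂ : ℝ} (h₁ : 0 ≤ e₁) (h₁' : e₁ ≤ 1)
    (h₂ : 0 ≤ e₂) (h₂' : e₂ ≤ 1) : |(e₁ + e₂) / 2| + |(e₁ - e₂) / 2| ≤ 1 := by
  rw [abs_of_nonneg (by positivity)]
  rcases le_total e₂ e₁ with h | h
  · rw [abs_of_nonneg (by linarith)]; linarith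
  · rw [abs_of_nonpos (by linarith)]; linarith

lemma exists_odeHalfStep_eq_mulVec {a b Δt : ℝ} (hΔt : 0 ≤ Δt) (hab₁ : 0 ≤ a + b)
    (hab₂ : 0 ≤ a - b) {B : Matrix (Fin 2) (Fin 2) ℝ} (hB : B = !![a, b; b, a]) :
    ∃ α β : ℝ, |α| + |β| ≤ 1 ∧ odeHalfStep B Δt = fun ξ j => !![α, β; β, α] *ᵥ ξ j := by
  refine ⟨_, _, abs_add_div_two_add_abs_sub_div_two_le_one (Real.exp_pos _).le
    (Real.exp_le_one_iff.2 (by nlinarith : -(Δt / 2) * (a + b) ≤ 0)) (Real.exp_pos _).le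
    (Real.exp_le_one_iff.2 (by nlinarith : -(Δt / 2) * (a - b) ≤ 0)), ?_⟩
  funext ξ j
  rw [odeHalfStep, hB, exp_neg_smul_symm_fin_two]

end HalfStep

/-- The full Strang-split step (ODE half-step, minmod Lax–Wendroff PDE step, ODE
half-step) with `B = [[a, b], [b, a]]`, `a + b > 0`, `a − b > 0`, `Δt > 0` and CFL number
`0 ≤ ν ≤ 1` is total-variation-diminishing and does not increase the discrete Lyapunov
function on finitely supported `ξ : ℤ → ℝ²`. -/
theorem strang_split_tvd_and_lyapunov (a b Δt ν : ℝ) (hΔt : 0 < Δt)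
    (hab₁ : 0 < a + b) (hab₂ : 0 < a - b) (hν₀ : 0 ≤ ν) (hν₁ : ν ≤ 1)
    (B : Matrix (Fin 2) (Fin 2) ℝ) (hB : B = !![a, b; b, a])
    (ξ : ℤ → Fin 2 → ℝ) (hfin : (Function.support ξ).Finite) :
    (∑' j : ℤ,
        (|(odeHalfStep B Δt (pdeStep ν (odeHalfStep B Δt ξ)) (j + 1) -
            odeHalfStep B Δt (pdeStep ν (odeHalfStep B Δt ξ)) j) 0| +
         |(odeHalfStep B Δt (pdeStep ν (odeHalfStep B Δt ξ)) (j + 1) -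
            odeHalfStep B Δt (pdeStep ν (odeHalfStep B Δt ξ)) j) 1|) ≤
      ∑' j : ℤ, (|(ξ (j + 1) - ξ j) 0| + |(ξ (j + 1) - ξ j) 1|)) ∧
    (∑' j : ℤ,
        ((odeHalfStep B Δt (pdeStep ν (odeHalfStep B Δt ξ)) j 0) ^ 2 +
         (odeHalfStep B Δt (pdeStep ν (odeHalfStep B Δt ξ)) j 1) ^ 2) ≤
      ∑' j : ℤ, ((ξ j 0) ^ 2 + (ξ j 1) ^ 2)) := by
  obtain ⟨α, β, hαβ, hO⟩ := exists_odeHalfStep_eq_mulVec hΔt.le hab₁.le hab₂.le hB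
  have hOtv (ζ : ℤ → Fin 2 → ℝ) (hζ : HasFiniteSupport ζ) :
      totalVariation (odeHalfStep B Δt ζ) ≤ totalVariation ζ := by
    rw [hO]
    exact totalVariation_mulVec_le (abs_mulVec_symm_fin_two_le hαβ)
      hζ.summable_abs_fwdDiff_add_abs_fwdDiff
  have hOly (ζ : ℤ → Fin 2 → ℝ) (hζ : HasFiniteSupport ζ) :
      lyapunov (odeHalfStep B Δt ζ) ≤ lyapunov ζ := by
    rw [hO]
    exact lyapunov_mulVec_le (sq_mulVec_symm_fin_two_le hαβ) hζ.summable_sq_add_sq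
  have hfin₁ := HasFiniteSupport.odeHalfStep hfin B Δt
  have hfin₂ := hfin₁.pdeStep (ν := ν)
  exact ⟨(hOtv _ hfin₂).trans ((totalVariation_pdeStep_le hν₀ hν₁ hfin₁).trans (hOtv ξ hfin)),
    (hOly _ hfin₂).trans ((lyapunov_pdeStep_le hν₀ hν₁ hfin₁).trans (hOly ξ hfin))⟩
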